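/- arXiv:0712.3091 — 4 statements merged into one kernel-verified Lean document; each statement's English description precedes it below -/
import Mathlib

section
/- Let d ≥ 1 and μ ∈ ℝ. For every real polynomial P in d variables, L_μ[(1−‖x‖²)P] = 4(μ+1)P + (1−‖x‖²)[−(4(μ+1)+2d)P + L_{μ+2}P], as an identity of polynomials. -/
open MvPolynomial

/-- The Laplacian `Δ = ∑ ∂²/∂xᵢ²` acting on polynomials in `d` variables. -/
noncomputable def lap {d : ℕ} (P : MvPolynomial (Fin d) ℝ) : MvPolynomial (Fin d) ℝ :=
  ∑ i, pderiv i (pderiv i P)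

/-- The Euler operator `⟨x,∇⟩ = ∑ xᵢ ∂/∂xᵢ` acting on polynomials in `d` variables. -/
noncomputable def eulerOp {d : ℕ} (P : MvPolynomial (Fin d) ℝ) : MvPolynomial (Fin d) ℝ :=
  ∑ i, X i * pderiv i P

/-- The operator `L_μ P = ΔP − ⟨x,∇⟩²P − (2μ+d)⟨x,∇⟩P`. -/
noncomputable def Lop (d : ℕ) (μ : ℝ) (P : MvPolynomial (Fin d) ℝ) : MvPolynomial (Fin d) ℝ :=
  lap P - eulerOp (eulerOp P) - (2 * μ + (d : ℝ)) • eulerOp P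

/-- The polynomial `‖x‖² = x₁² + ⋯ + x_d²`. -/
noncomputable def normSq (d : ℕ) : MvPolynomial (Fin d) ℝ := ∑ i, X i ^ 2

variable {d : ℕ}

lemma eulerOp_add (p q : MvPolynomial (Fin d) ℝ) :
    eulerOp (p + q) = eulerOp p + eulerOp q := by
  simp [eulerOp, mul_add, Finset.sum_add_distrib]

lemma eulerOp_mul (p q : MvPolynomial (Fin d) ℝ) :
    eulerOp (p * q) = p * eulerOp q + q * eulerOp p := by
  unfold eulerOp
  rw [Finset.mul_sum, Finset.mul_sum, ← Finset.sum_add_distrib]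
  refine Finset.sum_congr rfl fun i _ => ?_
  rw [pderiv_mul]; ring

lemma lap_mul (p q : MvPolynomial (Fin d) ℝ) :
    lap (p * q) = lap p * q + 2 * ∑ i, pderiv i p * pderiv i q + p * lap q := by
  unfold lap
  rw [Finset.sum_mul, Finset.mul_sum, Finset.mul_sum, ← Finset.sum_add_distrib,
    ← Finset.sum_add_distrib]
  refine Finset.sum_congr rfl fun i _ => ?_
  simp only [pderiv_mul, map_add]
  ring

lemma pderiv_normSq (i : Fin d) : pderiv i (normSq d) = 2 * X i := by
  rw [normSq, map_sum]
  rw [Finset.sum_eq_single i]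
  · simp [pow_two]; ring
  · intro j _ hj
    simp [pow_two, pderiv_X, Pi.single_apply, hj.symm]
  · simp

lemma eulerOp_normSq : eulerOp (normSq d) = 2 * normSq d := by
  unfold eulerOp
  simp only [pderiv_normSq]
  rw [normSq, Finset.mul_sum]
  exact Finset.sum_congr rfl fun i _ => by ring

lemma eulerOp_one_sub_normSq :
    eulerOp (1 - normSq d) = -(2 * normSq d) := by
  have h : (1 - normSq d : MvPolynomial (Fin d) ℝ) = 1 + (-1 : MvPolynomial (Fin d) ℝ) * normSq d := by ring
  rw [h, eulerOp_add, eulerOp_mul]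
  have h1 : eulerOp (1 : MvPolynomial (Fin d) ℝ) = 0 := by simp [eulerOp]
  have hneg : eulerOp (-1 : MvPolynomial (Fin d) ℝ) = 0 := by simp [eulerOp]
  rw [h1, hneg, eulerOp_normSq]
  ring

lemma eulerOp_neg_two_normSq :
    eulerOp (-(2 * normSq d) : MvPolynomial (Fin d) ℝ) = -(4 * normSq d) := by
  have h : (-(2 * normSq d) : MvPolynomial (Fin d) ℝ) = (-2 : MvPolynomial (Fin d) ℝ) * normSq d := by ring
  rw [h, eulerOp_mul, eulerOp_normSq]
  have hneg : eulerOp (-2 : MvPolynomial (Fin d) ℝ) = 0 := by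
    simp only [eulerOp, map_neg, ← map_ofNat (C : ℝ →+* MvPolynomial (Fin d) ℝ) 2, pderiv_C]
    simp
  rw [hneg]
  ring

lemma lap_one_sub_normSq :
    lap (1 - normSq d) = -(2 * C (d : ℝ)) := by
  unfold lap
  have : ∀ i : Fin d, pderiv i (pderiv i (1 - normSq d)) = -(C 2 : MvPolynomial (Fin d) ℝ) := by
    intro i
    rw [map_sub, map_sub, pderiv_normSq, pderiv_mul, pderiv_X,
      ← map_ofNat (C : ℝ →+* MvPolynomial (Fin d) ℝ) 2, pderiv_C]
    simp
  simp only [this, Finset.sum_const, Finset.card_univ, Fintype.card_fin]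
  rw [smul_neg, nsmul_eq_mul]
  rw [show ((d : MvPolynomial (Fin d) ℝ)) = C (d : ℝ) from (map_natCast (C : ℝ →+* MvPolynomial (Fin d) ℝ) d).symm]
  rw [show (C 2 : MvPolynomial (Fin d) ℝ) = 2 from map_ofNat (C : ℝ →+* MvPolynomial (Fin d) ℝ) 2]
  ring

lemma cross_one_sub_normSq (P : MvPolynomial (Fin d) ℝ) :
    ∑ i, pderiv i (1 - normSq d) * pderiv i P = -(2 * eulerOp P) := by
  unfold eulerOp
  rw [Finset.mul_sum, ← Finset.sum_neg_distrib]
  refine Finset.sum_congr rfl fun i _ => ?_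
  rw [map_sub, pderiv_normSq]
  simp; ring


/-- `L_μ[(1−‖x‖²)P] = 4(μ+1)P + (1−‖x‖²)[−(4(μ+1)+2d)P + L_{μ+2}P]`. -/
theorem stmt0 (d : ℕ) (hd : 1 ≤ d) (μ : ℝ) (P : MvPolynomial (Fin d) ℝ) :
    Lop d μ ((1 - normSq d) * P) =
      (4 * (μ + 1)) • P +
        (1 - normSq d) * ((-(4 * (μ + 1) + 2 * (d : ℝ))) • P + Lop d (μ + 2) P) := by
  unfold Lop
  rw [lap_mul, eulerOp_mul, eulerOp_one_sub_normSq, eulerOp_add, eulerOp_mul, eulerOp_mul,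
    eulerOp_one_sub_normSq, eulerOp_neg_two_normSq, lap_one_sub_normSq, cross_one_sub_normSq]
  simp only [smul_eq_C_mul, map_add, map_mul, map_neg, map_ofNat, map_one]
  ring
end

section
/- Let d be an odd positive integer and k ≥ 2 an integer. Then the operator L_{−k} has a complete polynomial basis of eigenfunctions: every real polynomial in d variables is a finite linear combination of polynomials P, each of which satisfies L_{−k} P = −m(m−2k+d) P for some nonnegative integer m. -/
open MvPolynomial

/-!
On a homogeneous polynomial `P` of degree `n`, `L_μ P = λₙ P + ΔP` with `λₙ = -n(n+2μ+d)`
(Euler's identity), and `ΔP` is homogeneous of degree `n - 2`. So `L_μ` is triangular with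
respect to the degree, and `λₙ - λₘ = -(n-m)(n+m+2μ+d)` vanishes for `n ≠ m` of equal parity
only if `2μ+d` is an even integer, which fails for `μ = -k` and `d` odd. By induction on `n`,
`(L_μ - λₙ) P = ΔP` then lies in a sum of eigenspaces for eigenvalues `λₘ ≠ λₙ`, on which
`L_μ - λₙ` is invertible, so `P` itself is a sum of eigenvectors.
-/

namespace Module.End

variable {K V : Type*} [Field K] [AddCommGroup V] [Module K V]

theorem mem_biSup_eigenspace_insert_of_sub_mem (f : End K V) {s : Set K} {μ : K} (hμ : μ ∉ s)
    {v : V} (hv : f v - μ • v ∈ ⨆ ν ∈ s, f.eigenspace ν) :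
    v ∈ ⨆ ν ∈ insert μ s, f.eigenspace ν := by
  set E := ⨆ ν ∈ s, f.eigenspace ν
  -- `f - μ` acts on the `ν`-eigenspace as multiplication by `ν - μ ≠ 0`.
  have hsurj : E ≤ E.map (f - μ • 1) := by
    refine iSup₂_le fun ν hν u hu => ⟨(ν - μ)⁻¹ • u,
      E.smul_mem _ (Submodule.mem_iSup_of_mem ν (Submodule.mem_iSup_of_mem hν hu)), ?_⟩
    have hne : ν - μ ≠ 0 := sub_ne_zero.mpr (ne_of_mem_of_not_mem hν hμ)
    rw [mem_eigenspace_iff] at hu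
    simp only [LinearMap.sub_apply, LinearMap.smul_apply, Module.End.one_apply, map_smul, hu,
      smul_smul, ← sub_smul, inv_mul_cancel₀ hne, one_smul]
  obtain ⟨u, hu, hfu⟩ := hsurj hv
  have hvu : v - u ∈ f.eigenspace μ := by
    simp only [LinearMap.sub_apply, LinearMap.smul_apply, Module.End.one_apply] at hfu
    rw [mem_eigenspace_iff, map_sub, smul_sub]
    linear_combination (norm := module) -hfu
  rw [← sub_add_cancel v u]
  have hmono : E ≤ ⨆ ν ∈ insert μ s, f.eigenspace ν := biSup_mono fun _ => Set.mem_insert_of_mem μ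
  exact add_mem (Submodule.mem_iSup_of_mem μ (Submodule.mem_iSup_of_mem (Set.mem_insert μ s) hvu))
    (hmono hu)

end Module.End

section LaplaceEuler

variable {d : ℕ}

noncomputable def lapEnd (d : ℕ) : Module.End ℝ (MvPolynomial (Fin d) ℝ) :=
  ∑ i, (pderiv i).toLinearMap * (pderiv i).toLinearMap

noncomputable def eulerEnd (d : ℕ) : Module.End ℝ (MvPolynomial (Fin d) ℝ) :=
  ∑ i, LinearMap.mulLeft ℝ (X i) * (pderiv i).toLinearMap

noncomputable def lopEnd (d : ℕ) (μ : ℝ) : Module.End ℝ (MvPolynomial (Fin d) ℝ) :=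
  lapEnd d - eulerEnd d * eulerEnd d - (2 * μ + d) • eulerEnd d

theorem lopEnd_apply (μ : ℝ) (P : MvPolynomial (Fin d) ℝ) : lopEnd d μ P = Lop d μ P := by
  simp only [lopEnd, lapEnd, eulerEnd, Lop, lap, eulerOp, LinearMap.sub_apply,
    LinearMap.smul_apply, Module.End.mul_apply, LinearMap.sum_apply, LinearMap.mulLeft_apply,
    Derivation.coeFn_coe]

theorem eulerEnd_of_isHomogeneous {n : ℕ} {P : MvPolynomial (Fin d) ℝ} (h : P.IsHomogeneous n) :
    eulerEnd d P = (n : ℝ) • P := by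
  simpa [eulerEnd, LinearMap.sum_apply, Nat.cast_smul_eq_nsmul] using h.sum_X_mul_pderiv

theorem isHomogeneous_lapEnd {n : ℕ} {P : MvPolynomial (Fin d) ℝ} (h : P.IsHomogeneous n) :
    (lapEnd d P).IsHomogeneous (n - 2) := by
  simp only [lapEnd, LinearMap.sum_apply, Module.End.mul_apply]
  exact IsHomogeneous.sum _ _ _ fun i _ => by simpa [Nat.sub_sub] using h.pderiv.pderiv

theorem lapEnd_eq_zero_of_isHomogeneous {n : ℕ} {P : MvPolynomial (Fin d) ℝ}
    (h : P.IsHomogeneous n) (hn : n ≤ 1) : lapEnd d P = 0 := by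
  simp only [lapEnd, LinearMap.sum_apply]
  refine Finset.sum_eq_zero fun i _ => ?_
  have h0 := (h.pderiv (i := i))
  rw [Nat.sub_eq_zero_of_le hn, ← totalDegree_zero_iff_isHomogeneous,
    totalDegree_eq_zero_iff_eq_C] at h0
  rw [Module.End.mul_apply, Derivation.coeFn_coe, h0, pderiv_C]

noncomputable def lopEigenvalue (d : ℕ) (μ : ℝ) (n : ℕ) : ℝ := -(n * (n + 2 * μ + d))

theorem lopEnd_sub_smul_of_isHomogeneous (μ : ℝ) {n : ℕ} {P : MvPolynomial (Fin d) ℝ}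
    (h : P.IsHomogeneous n) : lopEnd d μ P - lopEigenvalue d μ n • P = lapEnd d P := by
  simp only [lopEnd, LinearMap.sub_apply, Module.End.mul_apply, LinearMap.smul_apply,
    eulerEnd_of_isHomogeneous h, map_smul, lopEigenvalue]
  module

theorem eq_of_lopEigenvalue_eq_of_mod_two_eq {μ : ℝ} (hμ : ∀ j : ℤ, 2 * μ + d ≠ 2 * j) {n m : ℕ}
    (hnm : n % 2 = m % 2) (h : lopEigenvalue d μ n = lopEigenvalue d μ m) : n = m := by
  have hprod : ((n : ℝ) - m) * (n + m + 2 * μ + d) = 0 := by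
    unfold lopEigenvalue at h; linear_combination -h
  rcases mul_eq_zero.mp hprod with h | h
  · exact_mod_cast sub_eq_zero.mp h
  · obtain ⟨j, hj⟩ : ∃ j : ℕ, n + m = 2 * j := ⟨(n + m) / 2, by omega⟩
    have hj' : (n : ℝ) + m = 2 * j := by exact_mod_cast hj
    exact (hμ (-j) (by push_cast; linear_combination h - hj')).elim

end LaplaceEuler

section Eigenbasis

variable {d : ℕ} {μ : ℝ}

theorem mem_biSup_eigenspace_lopEnd_of_isHomogeneous (hμ : ∀ j : ℤ, 2 * μ + d ≠ 2 * j) (n : ℕ)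
    {P : MvPolynomial (Fin d) ℝ} (h : P.IsHomogeneous n) :
    P ∈ ⨆ ν ∈ lopEigenvalue d μ '' {m | m ≤ n ∧ m % 2 = n % 2}, (lopEnd d μ).eigenspace ν := by
  induction n using Nat.strong_induction_on generalizing P with
  | _ n ih =>
  set ev := lopEigenvalue d μ
  have hlap : lapEnd d P ∈ ⨆ ν ∈ ev '' {m | m < n ∧ m % 2 = n % 2}, (lopEnd d μ).eigenspace ν := by
    rcases lt_or_ge n 2 with hn | hn
    · rw [lapEnd_eq_zero_of_isHomogeneous h (by omega)]
      exact zero_mem _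
    · refine SetLike.le_def.mp (biSup_mono ?_) (ih (n - 2) (by omega) (isHomogeneous_lapEnd h))
      rintro _ ⟨m, ⟨hmn, hm2⟩, rfl⟩
      exact ⟨m, ⟨by omega, by omega⟩, rfl⟩
  have hfresh : ev n ∉ ev '' {m | m < n ∧ m % 2 = n % 2} := by
    rintro ⟨m, hm, heq⟩
    exact hm.1.ne (eq_of_lopEigenvalue_eq_of_mod_two_eq hμ hm.2 heq)
  have hP := (lopEnd d μ).mem_biSup_eigenspace_insert_of_sub_mem hfresh
    (by rwa [lopEnd_sub_smul_of_isHomogeneous μ h])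
  refine SetLike.le_def.mp (biSup_mono ?_) hP
  rintro _ (rfl | ⟨m, hm, rfl⟩)
  · exact ⟨n, ⟨le_rfl, rfl⟩, rfl⟩
  · exact ⟨m, ⟨hm.1.le, hm.2⟩, rfl⟩

theorem iSup_eigenspace_lopEnd_eq_top (hμ : ∀ j : ℤ, 2 * μ + d ≠ 2 * j) :
    ⨆ n : ℕ, (lopEnd d μ).eigenspace (lopEigenvalue d μ n) = ⊤ := by
  refine eq_top_iff.mpr fun P _ => ?_
  rw [← P.sum_homogeneousComponent]
  refine Submodule.sum_mem _ fun n _ => ?_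
  have hle : ⨆ ν ∈ lopEigenvalue d μ '' {m | m ≤ n ∧ m % 2 = n % 2}, (lopEnd d μ).eigenspace ν ≤
      ⨆ m : ℕ, (lopEnd d μ).eigenspace (lopEigenvalue d μ m) := by
    rw [iSup_image]
    exact iSup₂_le fun m _ => le_iSup (fun m => (lopEnd d μ).eigenspace (lopEigenvalue d μ m)) m
  exact hle (mem_biSup_eigenspace_lopEnd_of_isHomogeneous hμ n
    (homogeneousComponent_isHomogeneous n P))

end Eigenbasis

theorem stmt8_general (d : ℕ) (hodd : Odd d) (k : ℕ) :
    Submodule.span ℝ {P : MvPolynomial (Fin d) ℝ |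
        ∃ m : ℕ, Lop d (-(k : ℝ)) P =
          (-(m : ℝ) * ((m : ℝ) - 2 * (k : ℝ) + (d : ℝ))) • P} = ⊤ := by
  have hμ : ∀ j : ℤ, 2 * -(k : ℝ) + d ≠ 2 * j := fun j h => by
    have hd : (d : ℤ) = 2 * (j + k) := by exact_mod_cast
      (by linear_combination h : (d : ℝ) = 2 * (j + k))
    obtain ⟨t, ht⟩ := hodd
    omega
  rw [eq_top_iff, ← iSup_eigenspace_lopEnd_eq_top hμ]
  refine iSup_le fun n P hP => Submodule.subset_span ⟨n, ?_⟩
  rw [Module.End.mem_eigenspace_iff, lopEnd_apply] at hP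
  rw [hP, lopEigenvalue]
  congr 1
  ring

/-- for odd dimension `d` and `k ≥ 2`, the operator `L_{−k}` has a complete
polynomial basis of eigenfunctions: every polynomial is in the span of the polynomials `P`
satisfying `L_{−k} P = −m(m−2k+d) P` for some nonnegative integer `m`. -/
theorem stmt8 (d : ℕ) (hd : 1 ≤ d) (hodd : Odd d) (k : ℕ) (hk : 2 ≤ k) :
    Submodule.span ℝ {P : MvPolynomial (Fin d) ℝ |
        ∃ m : ℕ, Lop d (-(k : ℝ)) P =
          (-(m : ℝ) * ((m : ℝ) - 2 * (k : ℝ) + (d : ℝ))) • P} = ⊤ :=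
  stmt8_general d hodd k
end

section
/- Let d ≥ 1 be an integer. Then the operator L_{−1} has a complete polynomial basis of eigenfunctions: every real polynomial in d variables is a finite linear combination of polynomials P, each of which satisfies L_{−1} P = −m(m+d−2) P for some nonnegative integer m. -/
open MvPolynomial

/-! On homogeneous polynomials of degree `n` the Euler operator acts as multiplication by `n`, so
there `L_{-1} = Δ + λₙ` with `λₙ = -n(n+d-2)`, while `Δ` lowers the degree by two. For `d ≥ 1`
we have `λₙ < λₘ` whenever `m + 2 ≤ n`, so by induction on the degree every
homogeneous polynomial lies in the sum of the eigenspaces for `λₘ`, `m ≤ n`: if `(f - c) v` lies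
in a sum of eigenspaces of `f` for eigenvalues other than `c`, then `v` lies in that sum plus the
`c`-eigenspace. -/

theorem Module.End.mem_eigenspace_sup_of_sub_smul_mem {K V ι : Type*} [Field K] [AddCommGroup V]
    [Module K V] {f : Module.End K V} {μ : ι → K} {s : Set ι} {c : K} (hc : ∀ i ∈ s, μ i ≠ c) {v : V}
    (hv : f v - c • v ∈ ⨆ i ∈ s, f.eigenspace (μ i)) :
    v ∈ f.eigenspace c ⊔ ⨆ i ∈ s, f.eigenspace (μ i) := by
  set W := ⨆ i ∈ s, f.eigenspace (μ i)
  -- `f - c • 1` acts on `f.eigenspace (μ i)` as the invertible scalar `μ i - c`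
  have hW : W ≤ W.map (f - c • 1) := by
    refine iSup₂_le fun i hi w hw => ⟨(μ i - c)⁻¹ • w, ?_, ?_⟩
    · exact le_iSup₂ (f := fun i (_ : i ∈ s) => f.eigenspace (μ i)) i hi
        ((f.eigenspace (μ i)).smul_mem _ hw)
    · rw [mem_eigenspace_iff] at hw
      simp [hw, smul_smul, ← sub_smul, inv_mul_cancel₀ (sub_ne_zero.mpr (hc i hi))]
  obtain ⟨u, hu, hfu⟩ := hW hv
  refine Submodule.mem_sup.mpr ⟨v - u, ?_, u, hu, sub_add_cancel v u⟩
  rw [mem_eigenspace_iff, map_sub, smul_sub, sub_eq_sub_iff_sub_eq_sub]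
  simpa using hfu.symm

namespace MvPolynomial

variable {σ R : Type*} [CommSemiring R] {φ : MvPolynomial σ R} {n : ℕ}

theorem IsHomogeneous.pderiv_eq_zero (h : φ.IsHomogeneous 0) (i : σ) : pderiv i φ = 0 := by
  rw [← totalDegree_zero_iff_isHomogeneous, totalDegree_eq_zero_iff_eq_C] at h
  rw [h, pderiv_C]

end MvPolynomial

variable {d n : ℕ} {P : MvPolynomial (Fin d) ℝ}

noncomputable def lapₗ (d : ℕ) : Module.End ℝ (MvPolynomial (Fin d) ℝ) :=
  ∑ i, (pderiv i).toLinearMap * (pderiv i).toLinearMap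

noncomputable def eulerOpₗ (d : ℕ) : Module.End ℝ (MvPolynomial (Fin d) ℝ) :=
  ∑ i, LinearMap.mulLeft ℝ (X i) * (pderiv i).toLinearMap

noncomputable def Lopₗ (d : ℕ) (μ : ℝ) : Module.End ℝ (MvPolynomial (Fin d) ℝ) :=
  lapₗ d - eulerOpₗ d * eulerOpₗ d - (2 * μ + (d : ℝ)) • eulerOpₗ d

theorem Lopₗ_apply (μ : ℝ) (P : MvPolynomial (Fin d) ℝ) : Lopₗ d μ P = Lop d μ P := by
  simp only [Lopₗ, lapₗ, eulerOpₗ, Lop, lap, eulerOp, LinearMap.sub_apply, LinearMap.smul_apply,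
    LinearMap.sum_apply, Module.End.mul_apply, LinearMap.mulLeft_apply, Derivation.coeFn_coe]

theorem eulerOp_of_isHomogeneous (h : P.IsHomogeneous n) : eulerOp P = (n : ℝ) • P := by
  rw [eulerOp, h.sum_X_mul_pderiv, Nat.cast_smul_eq_nsmul]

theorem isHomogeneous_lap (h : P.IsHomogeneous n) : (lap P).IsHomogeneous (n - 2) :=
  Submodule.sum_mem (homogeneousSubmodule (Fin d) ℝ (n - 2)) fun _ _ => h.pderiv.pderiv

theorem lap_eq_zero_of_isHomogeneous (h : P.IsHomogeneous n) (hn : n < 2) : lap P = 0 :=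
  Finset.sum_eq_zero fun i _ => by
    have hi : (pderiv i P).IsHomogeneous 0 := by simpa [show n - 1 = 0 by omega] using h.pderiv
    rw [hi.pderiv_eq_zero]

noncomputable def sphericalEigenvalue (d m : ℕ) : ℝ := -(m : ℝ) * ((m : ℝ) + (d : ℝ) - 2)

theorem sphericalEigenvalue_lt (hd : 1 ≤ d) {m : ℕ} (h : m + 2 ≤ n) :
    sphericalEigenvalue d n < sphericalEigenvalue d m := by
  have hmn : (m : ℝ) + 2 ≤ n := by exact_mod_cast h
  have hd' : (1 : ℝ) ≤ d := by exact_mod_cast hd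
  unfold sphericalEigenvalue
  nlinarith [(m.cast_nonneg : (0 : ℝ) ≤ m)]

theorem Lop_neg_one_sub_smul_of_isHomogeneous (h : P.IsHomogeneous n) :
    Lop d (-1) P - sphericalEigenvalue d n • P = lap P := by
  have hE : eulerOp P = (n : ℝ) • P := eulerOp_of_isHomogeneous h
  have hEE : eulerOp (eulerOp P) = ((n : ℝ) * n) • P := by
    rw [hE, eulerOp_of_isHomogeneous ((homogeneousSubmodule (Fin d) ℝ n).smul_mem _ h), smul_smul]
  rw [Lop, hEE, hE, sphericalEigenvalue]
  module

theorem mem_iSup_eigenspace_of_isHomogeneous (hd : 1 ≤ d) (h : P.IsHomogeneous n) :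
    P ∈ ⨆ m ∈ Set.Iic n, (Lopₗ d (-1)).eigenspace (sphericalEigenvalue d m) := by
  induction n using Nat.strong_induction_on generalizing P with
  | _ n ih =>
  have hlap : lap P ∈ ⨆ m ∈ {m | m + 2 ≤ n}, (Lopₗ d (-1)).eigenspace (sphericalEigenvalue d m) := by
    rcases lt_or_ge n 2 with hn | hn
    · rw [lap_eq_zero_of_isHomogeneous h hn]
      exact zero_mem _
    · obtain ⟨k, rfl⟩ := Nat.exists_eq_add_of_le' hn
      refine SetLike.le_def.mp (iSup₂_mono' fun m hm => ⟨m, ?_, le_rfl⟩)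
        (ih k (by omega) (isHomogeneous_lap h))
      simpa using hm
  have hP := Module.End.mem_eigenspace_sup_of_sub_smul_mem (c := sphericalEigenvalue d n)
    (fun m hm => (sphericalEigenvalue_lt hd hm).ne')
    (by rwa [Lopₗ_apply, Lop_neg_one_sub_smul_of_isHomogeneous h])
  refine SetLike.le_def.mp (sup_le ?_ ?_) hP
  · exact le_iSup₂_of_le n (Set.mem_Iic.mpr le_rfl) le_rfl
  · exact iSup₂_mono' fun m (hm : m + 2 ≤ n) => ⟨m, Set.mem_Iic.mpr (by omega), le_rfl⟩

/-- the operator `L_{−1}` has a complete polynomial basis of eigenfunctions: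
every polynomial is in the span of the polynomials `P` satisfying
`L_{−1} P = −m(m+d−2) P` for some nonnegative integer `m`. -/
theorem stmt9 (d : ℕ) (hd : 1 ≤ d) :
    Submodule.span ℝ {P : MvPolynomial (Fin d) ℝ |
        ∃ m : ℕ, Lop d (-1) P = (-(m : ℝ) * ((m : ℝ) + (d : ℝ) - 2)) • P} = ⊤ := by
  refine eq_top_iff.mpr fun P _ => ?_
  rw [← sum_homogeneousComponent P]
  refine Submodule.sum_mem _ fun n _ => ?_
  have hPn := mem_iSup_eigenspace_of_isHomogeneous hd (homogeneousComponent_isHomogeneous n P)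
  refine SetLike.le_def.mp ?_ hPn
  refine iSup₂_le fun m _ Q hQ => Submodule.subset_span ⟨m, ?_⟩
  rw [← Lopₗ_apply]
  exact Module.End.mem_eigenspace_iff.mp hQ
end

section
/- Let d ≥ 1, λ > 0, and n ≥ 1. If P is a polynomial in d variables that is homogeneous of degree n and harmonic (ΔP = 0), then ⟨P, g⟩_{−2} = 0 for every polynomial g of degree at most n−1. -/
/-!
The `λ`-term vanishes because `ΔP = 0`. For the boundary term, replace the sphere by the Gaussian
weight `e^{-‖x‖²}`: in polar coordinates a homogeneous `f` of degree `m` satisfies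
`∫ f e^{-‖x‖²} = (∫_{S^{d-1}} f dω) · ∫_0^∞ r^{d-1+m} e^{-r²} dr`, so it suffices to show
`∫ P q e^{-‖x‖²} = 0` for `q` homogeneous of degree `j < n`. Gaussian integration by parts,
`∫ xᵢ f e^{-‖x‖²} = ½ ∫ ∂ᵢf e^{-‖x‖²}`, together with Euler's identity `j q = ∑ xᵢ ∂ᵢq` reduces this
to the same integrals for the pairs `(∂ᵢP, ∂ᵢq)` and `(P, ∂ᵢ²q)`, which vanish by induction on `j`.
For `j = 0` the same two identities give `n ∫ P e^{-‖x‖²} = ½ ∫ ΔP e^{-‖x‖²} = 0`.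
-/

open MvPolynomial MeasureTheory

/-- Evaluation of a polynomial at a point of Euclidean space. -/
noncomputable def evalP {d : ℕ} (f : MvPolynomial (Fin d) ℝ)
    (x : EuclideanSpace ℝ (Fin d)) : ℝ :=
  MvPolynomial.eval (fun i => x i) f

/-- The closed unit ball `B^d ⊆ ℝ^d`. -/
noncomputable def ballD (d : ℕ) : Set (EuclideanSpace ℝ (Fin d)) :=
  Metric.closedBall 0 1

/-- The surface measure `dω` on the unit sphere `S^{d−1}`. -/
noncomputable def sphereMeas (d : ℕ) :
    Measure (Metric.sphere (0 : EuclideanSpace ℝ (Fin d)) 1) :=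
  (volume : Measure (EuclideanSpace ℝ (Fin d))).toSphere

/-- The total surface area `ω_d = ∫_{S^{d−1}} dω`. -/
noncomputable def omegaD (d : ℕ) : ℝ := (sphereMeas d Set.univ).toReal

/-- The volume of the unit ball `B^d`. -/
noncomputable def volB (d : ℕ) : ℝ := (volume (ballD d)).toReal

/-- The inner product
`⟨f,g⟩_{−2} = (λ/ω_d) ∫_{B^d} Δf Δg dx + (1/ω_d) ∫_{S^{d−1}} f g dω`. -/
noncomputable def innerNeg2 (d : ℕ) (lam : ℝ) (f g : MvPolynomial (Fin d) ℝ) : ℝ :=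
  (lam / omegaD d) * ∫ x in ballD d, evalP (lap f) x * evalP (lap g) x +
    (1 / omegaD d) * ∫ y : Metric.sphere (0 : EuclideanSpace ℝ (Fin d)) 1,
      evalP f y * evalP g y ∂(sphereMeas d)

/-- The inner product
`⟨f,g⟩_Δ = a_d ∫_{B^d} Δ[(1−‖x‖²)f] Δ[(1−‖x‖²)g] dx`, `a_d = 1/(4d² vol(B^d))`. -/
noncomputable def innerDelta (d : ℕ) (f g : MvPolynomial (Fin d) ℝ) : ℝ :=
  (1 / (4 * (d : ℝ) ^ 2 * volB d)) *
    ∫ x in ballD d,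
      evalP (lap ((1 - normSq d) * f)) x * evalP (lap ((1 - normSq d) * g)) x

open Real Set

namespace MvPolynomial

theorem pderiv_pderiv_comm {R σ : Type*} [CommRing R] (i j : σ) (f : MvPolynomial σ R) :
    pderiv i (pderiv j f) = pderiv j (pderiv i f) := by
  classical
  have h : ⁅pderiv i, pderiv j⁆ = (0 : Derivation R (MvPolynomial σ R) (MvPolynomial σ R)) :=
    derivation_ext fun k => by
      rw [Derivation.commutator_apply, pderiv_X, pderiv_X, Pi.single_apply, Pi.single_apply]
      split_ifs <;> simp
  rw [← sub_eq_zero, ← Derivation.commutator_apply, h, Derivation.zero_apply]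

end MvPolynomial

theorem lap_pderiv {d : ℕ} (i : Fin d) (f : MvPolynomial (Fin d) ℝ) :
    lap (pderiv i f) = pderiv i (lap f) := by
  simp only [lap, map_sum, pderiv_pderiv_comm i]

noncomputable def gaussMoment (k : ℕ) : ℝ := ∫ x : ℝ, x ^ k * exp (-x ^ 2)

theorem integrable_pow_mul_exp_neg_sq (k : ℕ) :
    Integrable fun x : ℝ => x ^ k * exp (-x ^ 2) := by
  simpa [rpow_natCast] using integrable_rpow_mul_exp_neg_mul_sq one_pos
    (s := k) (neg_one_lt_zero.trans_le k.cast_nonneg)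

theorem integral_Ioi_pow_mul_exp_neg_sq (k : ℕ) :
    ∫ x in Ioi (0 : ℝ), x ^ k * exp (-x ^ 2) = Gamma ((k + 1) / 2) / 2 := by
  have h := integral_rpow_mul_exp_neg_rpow two_pos (q := k)
    (neg_one_lt_zero.trans_le k.cast_nonneg)
  rw [one_div_mul_eq_div] at h
  rw [← h]
  refine setIntegral_congr_fun measurableSet_Ioi fun x _ => ?_
  norm_cast

theorem integral_Ioi_pow_mul_exp_neg_sq_pos (k : ℕ) :
    0 < ∫ x in Ioi (0 : ℝ), x ^ k * exp (-x ^ 2) := by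
  rw [integral_Ioi_pow_mul_exp_neg_sq]
  exact half_pos (Gamma_pos_of_pos (by positivity))

theorem gaussMoment_of_even {k : ℕ} (hk : Even k) : gaussMoment k = Gamma ((k + 1) / 2) := by
  have h := integral_comp_abs (f := fun x : ℝ => x ^ k * exp (-x ^ 2))
  simp only [hk.pow_abs, sq_abs] at h
  rw [gaussMoment, h, integral_Ioi_pow_mul_exp_neg_sq]
  ring

theorem gaussMoment_of_odd {k : ℕ} (hk : Odd k) : gaussMoment k = 0 := by
  have h := integral_neg_eq_self (fun x : ℝ => x ^ k * exp (-x ^ 2)) volume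
  simp only [hk.neg_pow, neg_sq, neg_mul, integral_neg] at h
  rw [gaussMoment]
  linarith

theorem gaussMoment_succ (a : ℕ) : gaussMoment (a + 1) = a / 2 * gaussMoment (a - 1) := by
  rcases a with _ | b
  · simp [gaussMoment_of_odd odd_one]
  rcases Nat.even_or_odd b with hb | hb
  · rw [gaussMoment_of_even (by simpa [add_assoc] using hb.add even_two),
      Nat.add_sub_cancel, gaussMoment_of_even hb]
    push_cast
    rw [show ((b : ℝ) + 1 + 1 + 1) / 2 = (b + 1) / 2 + 1 by ring,
      Gamma_add_one (by positivity)]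
  · rw [gaussMoment_of_odd (by simpa [add_assoc] using hb.add_even even_two),
      Nat.add_sub_cancel, gaussMoment_of_odd hb, mul_zero]

section GaussianIntegral

variable {d : ℕ}

theorem eval_monomial_mul_exp_neg_sum_sq (α : Fin d →₀ ℕ) (c : ℝ) (x : Fin d → ℝ) :
    eval x (monomial α c) * exp (-∑ i, x i ^ 2) = c * ∏ i, (x i ^ α i * exp (-x i ^ 2)) := by
  rw [eval_monomial, Finsupp.prod_fintype _ _ (fun _ => pow_zero _), Finset.prod_mul_distrib,
    ← exp_sum, Finset.sum_neg_distrib, mul_assoc]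

theorem integrable_eval_mul_exp_neg_sum_sq (f : MvPolynomial (Fin d) ℝ) :
    Integrable fun x : Fin d → ℝ => eval x f * exp (-∑ i, x i ^ 2) := by
  induction f using MvPolynomial.induction_on' with
  | monomial α c =>
    simp only [eval_monomial_mul_exp_neg_sum_sq]
    exact (Integrable.fintype_prod fun i => integrable_pow_mul_exp_neg_sq (α i)).const_mul c
  | add f g hf hg =>
    simp only [map_add, add_mul]
    exact hf.add hg

noncomputable def gaussInt (d : ℕ) : MvPolynomial (Fin d) ℝ →ₗ[ℝ] ℝ where
  toFun f := ∫ x : Fin d → ℝ, eval x f * exp (-∑ i, x i ^ 2)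
  map_add' f g := by
    simp only [map_add, add_mul]
    exact integral_add (integrable_eval_mul_exp_neg_sum_sq f)
      (integrable_eval_mul_exp_neg_sum_sq g)
  map_smul' c f := by
    simp only [smul_eval, mul_assoc, integral_const_mul, RingHom.id_apply, smul_eq_mul]

theorem gaussInt_apply (f : MvPolynomial (Fin d) ℝ) :
    gaussInt d f = ∫ x : Fin d → ℝ, eval x f * exp (-∑ i, x i ^ 2) := rfl

theorem gaussInt_monomial (α : Fin d →₀ ℕ) (c : ℝ) :
    gaussInt d (monomial α c) = c * ∏ i, gaussMoment (α i) := by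
  simp only [gaussInt_apply, eval_monomial_mul_exp_neg_sum_sq, integral_const_mul]
  rw [integral_fintype_prod_volume_eq_prod (fun i (t : ℝ) => t ^ α i * exp (-t ^ 2))]
  rfl

theorem prod_gaussMoment_eq_mul_prod_erase {α β : Fin d →₀ ℕ} (i : Fin d)
    (h : ∀ j ≠ i, β j = α j) :
    ∏ j, gaussMoment (β j) = gaussMoment (β i) * ∏ j ∈ Finset.univ.erase i, gaussMoment (α j) := by
  rw [← Finset.mul_prod_erase _ _ (Finset.mem_univ i)]
  congr 1
  exact Finset.prod_congr rfl fun j hj => by rw [h j (Finset.ne_of_mem_erase hj)]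

theorem gaussInt_X_mul (i : Fin d) (f : MvPolynomial (Fin d) ℝ) :
    gaussInt d (X i * f) = gaussInt d (pderiv i f) / 2 := by
  induction f using MvPolynomial.induction_on' with
  | monomial α c =>
    rw [X, monomial_mul, one_mul, pderiv_monomial, gaussInt_monomial, gaussInt_monomial,
      prod_gaussMoment_eq_mul_prod_erase (α := α) i, prod_gaussMoment_eq_mul_prod_erase (α := α) i]
    · simp only [Finsupp.add_apply, Finsupp.tsub_apply, Finsupp.single_eq_same, add_comm 1,
        gaussMoment_succ]
      ring
    all_goals intro j hj; simp [hj.symm]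
  | add f g hf hg => simp only [mul_add, map_add, hf, hg, add_div]

theorem gaussInt_lap_of_isHomogeneous {f : MvPolynomial (Fin d) ℝ} {m : ℕ}
    (hf : f.IsHomogeneous m) : m * gaussInt d f = gaussInt d (lap f) / 2 := by
  calc (m : ℝ) * gaussInt d f = gaussInt d (∑ i, X i * pderiv i f) := by
        rw [hf.sum_X_mul_pderiv, map_nsmul, nsmul_eq_mul]
    _ = gaussInt d (lap f) / 2 := by
        simp only [map_sum, gaussInt_X_mul, lap, Finset.sum_div]

end GaussianIntegral

section HarmonicOrthogonality

variable {d n : ℕ} {P : MvPolynomial (Fin d) ℝ}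

theorem gaussInt_eq_zero_of_harmonic (hP : P.IsHomogeneous n) (hn : n ≠ 0) (hharm : lap P = 0) :
    gaussInt d P = 0 := by
  have h := gaussInt_lap_of_isHomogeneous hP
  rw [hharm, map_zero, zero_div] at h
  exact (mul_eq_zero.mp h).resolve_left (Nat.cast_ne_zero.mpr hn)

theorem gaussInt_harmonic_mul_eq_zero (hP : P.IsHomogeneous n) (hharm : lap P = 0)
    {q : MvPolynomial (Fin d) ℝ} {j : ℕ} (hq : q.IsHomogeneous j) (hjn : j < n) :
    gaussInt d (P * q) = 0 := by
  induction j using Nat.strong_induction_on generalizing n P q with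
  | _ j ih =>
  rcases Nat.eq_zero_or_pos j with rfl | hj
  · rw [totalDegree_eq_zero_iff_eq_C.mp ((totalDegree_zero_iff_isHomogeneous _).mpr hq),
      mul_comm, C_mul', map_smul, gaussInt_eq_zero_of_harmonic hP hjn.ne' hharm, smul_zero]
  have hterm : ∀ i, gaussInt d (X i * (P * pderiv i q)) = 0 := fun i => by
    have h₁ := ih (j - 1) (by omega) (hP.pderiv (i := i))
      (by rw [lap_pderiv, hharm, map_zero]) (hq.pderiv (i := i)) (by omega)
    have h₂ := ih (j - 1 - 1) (by omega) hP hharm ((hq.pderiv (i := i)).pderiv (i := i))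
      (by omega)
    rw [gaussInt_X_mul, pderiv_mul, map_add, h₁, h₂, add_zero, zero_div]
  have h : (j : ℝ) * gaussInt d (P * q) = 0 := by
    rw [← nsmul_eq_mul, ← map_nsmul, ← mul_smul_comm, ← hq.sum_X_mul_pderiv, Finset.mul_sum,
      map_sum]
    exact Finset.sum_eq_zero fun i _ => by rw [mul_left_comm, hterm]
  exact (mul_eq_zero.mp h).resolve_left (Nat.cast_ne_zero.mpr hj.ne')

end HarmonicOrthogonality

section PolarCoordinates

theorem integral_volumeIoiPow (n : ℕ) (ψ : ℝ → ℝ) :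
    ∫ r : Ioi (0 : ℝ), ψ r ∂(Measure.volumeIoiPow n) = ∫ r in Ioi (0 : ℝ), r ^ n * ψ r := by
  rw [Measure.volumeIoiPow, integral_withDensity_eq_integral_toReal_smul
      ((measurable_subtype_coe.pow_const n).ennreal_ofReal) (Filter.Eventually.of_forall
        fun _ => ENNReal.ofReal_lt_top),
    integral_subtype_comap measurableSet_Ioi fun r : ℝ => (ENNReal.ofReal (r ^ n)).toReal • ψ r]
  refine setIntegral_congr_fun measurableSet_Ioi fun r hr => ?_
  rw [ENNReal.toReal_ofReal (pow_nonneg (le_of_lt hr) n), smul_eq_mul]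

variable {E : Type*} [NormedAddCommGroup E] [NormedSpace ℝ E] [FiniteDimensional ℝ E]
  [MeasurableSpace E] [BorelSpace E]

theorem integral_eq_integral_sphere_mul_integral_Ioi [Nontrivial E] (μ : Measure E)
    [μ.IsAddHaarMeasure] {F : E → ℝ} (φ : Metric.sphere (0 : E) 1 → ℝ) (ψ : ℝ → ℝ)
    (hF : ∀ θ : Metric.sphere (0 : E) 1, ∀ r : ℝ, 0 < r → F (r • (θ : E)) = φ θ * ψ r) :
    ∫ x, F x ∂μ = (∫ θ, φ θ ∂μ.toSphere) *
      ∫ r in Ioi (0 : ℝ), r ^ (Module.finrank ℝ E - 1) * ψ r := by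
  have hpolar := μ.measurePreserving_homeomorphUnitSphereProd.integral_comp
    (Homeomorph.measurableEmbedding _)
    (fun p => F ((homeomorphUnitSphereProd E).symm p : E))
  simp only [Homeomorph.symm_apply_apply] at hpolar
  calc ∫ x, F x ∂μ = ∫ x : ({0}ᶜ : Set E), F x ∂(μ.comap (↑)) := by
        rw [integral_subtype_comap (measurableSet_singleton 0).compl, restrict_compl_singleton]
    _ = ∫ p, φ p.1 * ψ p.2 ∂(μ.toSphere.prod (.volumeIoiPow (Module.finrank ℝ E - 1))) := by
        rw [hpolar]
        congr 1 with p
        rw [homeomorphUnitSphereProd_symm_apply_coe, hF _ _ p.2.2]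
    _ = _ := by rw [integral_prod_mul φ fun r : Ioi (0 : ℝ) => ψ r, integral_volumeIoiPow]

end PolarCoordinates

section Sphere

variable {d : ℕ}

theorem evalP_smul_of_isHomogeneous {f : MvPolynomial (Fin d) ℝ} {m : ℕ}
    (hf : f.IsHomogeneous m) (r : ℝ) (x : EuclideanSpace ℝ (Fin d)) :
    evalP f (r • x) = r ^ m * evalP f x := by
  simp only [evalP, PiLp.smul_apply, smul_eq_mul, eval_eq', Finset.mul_sum]
  refine Finset.sum_congr rfl fun α hα => ?_
  have hdeg : ∑ i, α i = m := by
    simpa [Finsupp.weight_apply, Finsupp.sum_fintype] using hf (mem_support_iff.mp hα)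
  rw [mul_left_comm, ← hdeg, ← Finset.prod_pow_eq_pow_sum, ← Finset.prod_mul_distrib]
  simp only [mul_pow]

theorem gaussInt_eq_integral_euclidean (f : MvPolynomial (Fin d) ℝ) :
    gaussInt d f = ∫ x : EuclideanSpace ℝ (Fin d), evalP f x * exp (-‖x‖ ^ 2) := by
  rw [← (EuclideanSpace.volume_preserving_symm_measurableEquiv_toLp (Fin d)).symm.integral_comp',
    gaussInt_apply]
  congr 1 with x
  simp [evalP, EuclideanSpace.norm_eq, sq_sqrt (Finset.sum_nonneg fun i _ => sq_nonneg _)]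

theorem gaussInt_eq_integral_sphere_mul [NeZero d] {f : MvPolynomial (Fin d) ℝ} {m : ℕ}
    (hf : f.IsHomogeneous m) :
    gaussInt d f = (∫ θ, evalP f θ ∂sphereMeas d) *
      ∫ r in Ioi (0 : ℝ), r ^ (d - 1 + m) * exp (-r ^ 2) := by
  rw [gaussInt_eq_integral_euclidean, integral_eq_integral_sphere_mul_integral_Ioi volume
    (fun θ => evalP f θ) (fun r => r ^ m * exp (-r ^ 2)), finrank_euclideanSpace_fin]
  · simp only [sphereMeas, pow_add, mul_assoc]
  · intro θ r hr
    rw [evalP_smul_of_isHomogeneous hf, norm_smul, norm_eq_of_mem_sphere, mul_one,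
      Real.norm_of_nonneg hr.le]
    ring

theorem integrable_evalP_sphere (f : MvPolynomial (Fin d) ℝ) :
    Integrable (fun θ : Metric.sphere (0 : EuclideanSpace ℝ (Fin d)) 1 => evalP f θ)
      (sphereMeas d) := by
  have : IsFiniteMeasure (sphereMeas d) := by unfold sphereMeas; infer_instance
  have hcont : Continuous fun x : EuclideanSpace ℝ (Fin d) => evalP f x :=
    (continuous_eval f).comp (PiLp.continuous_ofLp 2 _)
  exact (hcont.comp continuous_subtype_val).integrable_of_hasCompactSupport
    (HasCompactSupport.of_compactSpace _)

theorem integral_sphere_harmonic_mul_eq_zero [NeZero d] {n j : ℕ} {P q : MvPolynomial (Fin d) ℝ}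
    (hP : P.IsHomogeneous n) (hharm : lap P = 0) (hq : q.IsHomogeneous j) (hjn : j < n) :
    ∫ θ, evalP (P * q) θ ∂sphereMeas d = 0 := by
  have h := gaussInt_eq_integral_sphere_mul (hP.mul hq)
  rw [gaussInt_harmonic_mul_eq_zero hP hharm hq hjn, eq_comm] at h
  exact (mul_eq_zero.mp h).resolve_right (integral_Ioi_pow_mul_exp_neg_sq_pos _).ne'

end Sphere

theorem stmt13_general (d : ℕ) (hd : 1 ≤ d) (lam : ℝ) (n : ℕ)
    (P : MvPolynomial (Fin d) ℝ) (hhom : P.IsHomogeneous n) (hharm : lap P = 0)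
    (g : MvPolynomial (Fin d) ℝ) (hg : g.totalDegree < n) :
    innerNeg2 d lam P g = 0 := by
  have : NeZero d := ⟨by omega⟩
  have hsphere : ∫ θ, evalP P θ * evalP g θ ∂sphereMeas d = 0 := by
    rw [← sum_homogeneousComponent g]
    simp only [evalP, map_sum, Finset.mul_sum]
    rw [integral_finsetSum _ fun j _ => by
      simpa only [evalP, map_mul] using integrable_evalP_sphere (P * homogeneousComponent j g)]
    refine Finset.sum_eq_zero fun j hj => ?_
    simpa only [evalP, map_mul] using integral_sphere_harmonic_mul_eq_zero hhom hharm
      (homogeneousComponent_isHomogeneous j g) (by simp at hj; omega)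
  rw [innerNeg2, hharm, hsphere]
  simp [evalP]

/-- a harmonic polynomial `P`, homogeneous of degree `n ≥ 1`, satisfies
`⟨P, g⟩_{−2} = 0` for every polynomial `g` of degree at most `n−1`. -/
theorem stmt13 (d : ℕ) (hd : 1 ≤ d) (lam : ℝ) (hlam : 0 < lam) (n : ℕ) (hn : 1 ≤ n)
    (P : MvPolynomial (Fin d) ℝ) (hhom : P.IsHomogeneous n) (hharm : lap P = 0)
    (g : MvPolynomial (Fin d) ℝ) (hg : g.totalDegree < n) :
    innerNeg2 d lam P g = 0 :=
  stmt13_general d hd lam n P hhom hharm g hg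
end
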